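/- Twisted equivariance of the Bruhat image: define Θ(g) = ẇ_0^{-1} g ẇ_0 for g ∈ GL_{2n}(F). Let X be an r×2m matrix and Y ∈ GL_r(F) with S(X,Y) invertible, let u_1 ∈ GL_r(F), u_2 ∈ Sp_{2m}(F), t ∈ F^×, and set u = diag(u_1, u_2, θ_r(u_1)) and z = α^∨(t). Then S(u_1^{-1} t X u_2, u_1^{-1} t² Y θ_r(u_1)) = u_2^{-1} S(X,Y) u_2 (in particular it is invertible), and Θ(z u^{-1}) · m(X,Y) · u z^{-1} = m(u_1^{-1} t X u_2, u_1^{-1} t² Y θ_r(u_1)). -/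
import Mathlib


open Matrix

namespace RS

variable (F : Type*) [Field F]

/-- The matrix `J_k`: its `(i, k+1-i)` entry (1-indexed) is `(-1)^(i-1)`, i.e. in 0-indexed
terms the `(i,j)` entry is `(-1)^i` when `i + j = k - 1`, and all other entries are `0`. -/
def Jmat (k : ℕ) : Matrix (Fin k) (Fin k) F :=
  Matrix.of fun i j => if (i : ℕ) + (j : ℕ) = k - 1 then (-1 : F) ^ (i : ℕ) else 0

/-- A 2×2 block matrix with blocks of sizes `a, b` (rows) and `c, d` (columns), realized on
`Fin (a+b) × Fin (c+d)`. -/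
def blk2 {a b c d : ℕ} (A : Matrix (Fin a) (Fin c) F) (B : Matrix (Fin a) (Fin d) F)
    (C : Matrix (Fin b) (Fin c) F) (D : Matrix (Fin b) (Fin d) F) :
    Matrix (Fin (a + b)) (Fin (c + d)) F :=
  Matrix.of fun i j =>
    if hi : (i : ℕ) < a then
      if hj : (j : ℕ) < c then A ⟨(i : ℕ), hi⟩ ⟨(j : ℕ), hj⟩
      else B ⟨(i : ℕ), hi⟩ ⟨(j : ℕ) - c, by have := j.isLt; omega⟩
    else
      if hj : (j : ℕ) < c then C ⟨(i : ℕ) - a, by have := i.isLt; omega⟩ ⟨(j : ℕ), hj⟩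
      else D ⟨(i : ℕ) - a, by have := i.isLt; omega⟩ ⟨(j : ℕ) - c, by have := j.isLt; omega⟩

/-- A 3×3 block (square) matrix with blocks of sizes `a, b, c`, realized on `Fin (a+b+c)`. -/
def blk3 {a b c : ℕ}
    (A11 : Matrix (Fin a) (Fin a) F) (A12 : Matrix (Fin a) (Fin b) F)
    (A13 : Matrix (Fin a) (Fin c) F)
    (A21 : Matrix (Fin b) (Fin a) F) (A22 : Matrix (Fin b) (Fin b) F)
    (A23 : Matrix (Fin b) (Fin c) F)
    (A31 : Matrix (Fin c) (Fin a) F) (A32 : Matrix (Fin c) (Fin b) F)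
    (A33 : Matrix (Fin c) (Fin c) F) :
    Matrix (Fin (a + b + c)) (Fin (a + b + c)) F :=
  Matrix.of fun i j =>
    if hi1 : (i : ℕ) < a then
      if hj1 : (j : ℕ) < a then A11 ⟨(i : ℕ), hi1⟩ ⟨(j : ℕ), hj1⟩
      else if hj2 : (j : ℕ) < a + b then A12 ⟨(i : ℕ), hi1⟩ ⟨(j : ℕ) - a, by omega⟩
      else A13 ⟨(i : ℕ), hi1⟩ ⟨(j : ℕ) - (a + b), by have := j.isLt; omega⟩
    else if hi2 : (i : ℕ) < a + b then
      if hj1 : (j : ℕ) < a then A21 ⟨(i : ℕ) - a, by omega⟩ ⟨(j : ℕ), hj1⟩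
      else if hj2 : (j : ℕ) < a + b then A22 ⟨(i : ℕ) - a, by omega⟩ ⟨(j : ℕ) - a, by omega⟩
      else A23 ⟨(i : ℕ) - a, by omega⟩ ⟨(j : ℕ) - (a + b), by have := j.isLt; omega⟩
    else
      if hj1 : (j : ℕ) < a then A31 ⟨(i : ℕ) - (a + b), by have := i.isLt; omega⟩ ⟨(j : ℕ), hj1⟩
      else if hj2 : (j : ℕ) < a + b then
        A32 ⟨(i : ℕ) - (a + b), by have := i.isLt; omega⟩ ⟨(j : ℕ) - a, by omega⟩
      else A33 ⟨(i : ℕ) - (a + b), by have := i.isLt; omega⟩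
        ⟨(j : ℕ) - (a + b), by have := j.isLt; omega⟩

/-- `J'_{2k}`, the `2k×2k` block matrix `[[0, J_k], [-J_kᵀ, 0]]`. -/
def Jp (k : ℕ) : Matrix (Fin (k + k)) (Fin (k + k)) F :=
  blk2 F 0 (Jmat F k) (-(Jmat F k)ᵀ) 0

/-- `Sp_{2N}(F) = {h ∈ GL_{2N}(F) : hᵀ J'_{2N} h = J'_{2N}}`. -/
def Sp (N : ℕ) : Set (Matrix (Fin (N + N)) (Fin (N + N)) F) :=
  {h | IsUnit h ∧ hᵀ * Jp F N * h = Jp F N}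

/-- `θ_r(g) = J_r (g⁻¹)ᵀ J_r⁻¹`. -/
noncomputable def theta (r : ℕ) (g : Matrix (Fin r) (Fin r) F) : Matrix (Fin r) (Fin r) F :=
  Jmat F r * (g⁻¹)ᵀ * (Jmat F r)⁻¹

/-- `θ_{r,m}(X) = (-1)^r J'_{2m} Xᵀ J_r`. -/
def thetaRM (r m : ℕ) (X : Matrix (Fin r) (Fin (m + m)) F) : Matrix (Fin (m + m)) (Fin r) F :=
  (-1 : F) ^ r • (Jp F m * Xᵀ * Jmat F r)

/-- `n(X,Y) = [[I_r, X, Y], [0, I_{2m}, θ_{r,m}(X)], [0, 0, I_r]]` (block sizes `r, 2m, r`). -/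
def nMat (r m : ℕ) (X : Matrix (Fin r) (Fin (m + m)) F) (Y : Matrix (Fin r) (Fin r) F) :
    Matrix (Fin (r + (m + m) + r)) (Fin (r + (m + m) + r)) F :=
  blk3 F 1 X Y 0 1 (thetaRM F r m X) 0 0 1

/-- `n̄(X,Y) = [[I_r, 0, 0], [(-1)^r J'_{2m} Xᵀ J_r, I_{2m}, 0], [(-1)^r Y, (-1)^r X, I_r]]`. -/
def nbarMat (r m : ℕ) (X : Matrix (Fin r) (Fin (m + m)) F) (Y : Matrix (Fin r) (Fin r) F) :
    Matrix (Fin (r + (m + m) + r)) (Fin (r + (m + m) + r)) F :=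
  blk3 F 1 0 0 ((-1 : F) ^ r • (Jp F m * Xᵀ * Jmat F r)) 1 0
    ((-1 : F) ^ r • Y) ((-1 : F) ^ r • X) 1

/-- `ẇ_0 = [[0, 0, I_r], [0, I_{2m}, 0], [(-1)^r I_r, 0, 0]]`. -/
def w0 (r m : ℕ) : Matrix (Fin (r + (m + m) + r)) (Fin (r + (m + m) + r)) F :=
  blk3 F 0 0 1 0 1 0 ((-1 : F) ^ r • (1 : Matrix (Fin r) (Fin r) F)) 0 0

/-- `S(X,Y) = I_{2m} - J'_{2m} Xᵀ (Y⁻¹)ᵀ J_r X`. -/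
noncomputable def Smat (r m : ℕ) (X : Matrix (Fin r) (Fin (m + m)) F) (Y : Matrix (Fin r) (Fin r) F) :
    Matrix (Fin (m + m)) (Fin (m + m)) F :=
  1 - Jp F m * Xᵀ * (Y⁻¹)ᵀ * Jmat F r * X

/-- The block diagonal matrix `diag(m₁, m₂, θ_r(m₁))`. -/
noncomputable def levi (r m : ℕ) (m1 : Matrix (Fin r) (Fin r) F)
    (m2 : Matrix (Fin (m + m)) (Fin (m + m)) F) :
    Matrix (Fin (r + (m + m) + r)) (Fin (r + (m + m) + r)) F :=
  blk3 F m1 0 0 0 m2 0 0 0 (theta F r m1)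

/-- `m(X,Y) = diag(θ_r(Y), S(X,Y)⁻¹, Y)`. -/
noncomputable def mMat (r m : ℕ) (X : Matrix (Fin r) (Fin (m + m)) F) (Y : Matrix (Fin r) (Fin r) F) :
    Matrix (Fin (r + (m + m) + r)) (Fin (r + (m + m) + r)) F :=
  blk3 F (theta F r Y) 0 0 0 (Smat F r m X Y)⁻¹ 0 0 0 Y

/-- `α^∨(t) = diag(t·I_r, I_{2m}, t⁻¹·I_r)`. -/
def coroot (r m : ℕ) (t : Fˣ) :
    Matrix (Fin (r + (m + m) + r)) (Fin (r + (m + m) + r)) F :=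
  blk3 F ((t : F) • (1 : Matrix (Fin r) (Fin r) F)) 0 0 0 1 0 0 0
    (((t⁻¹ : Fˣ) : F) • (1 : Matrix (Fin r) (Fin r) F))

/-- Transport of a `2n×2n` matrix written with block sizes `(r, 2m, r)` to the canonical
index type `Fin ((r+m)+(r+m))` (where `n = r + m`), along the obvious cast. -/
def toSp (r m : ℕ) (M : Matrix (Fin (r + (m + m) + r)) (Fin (r + (m + m) + r)) F) :
    Matrix (Fin ((r + m) + (r + m))) (Fin ((r + m) + (r + m))) F :=
  Matrix.reindex (finCongr (by omega)) (finCongr (by omega)) M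

/-- Upper-triangular unipotent matrices. -/
def UTU {k : ℕ} (u : Matrix (Fin k) (Fin k) F) : Prop :=
  (∀ i, u i i = 1) ∧ ∀ i j : Fin k, (j : ℕ) < (i : ℕ) → u i j = 0

/-- A row vector as a `1 × k` matrix. -/
def rowVec {k : ℕ} (v : Fin k → F) : Matrix (Fin 1) (Fin k) F := Matrix.of fun _ j => v j

/-- A column vector as a `k × 1` matrix. -/
def colVec {k : ℕ} (v : Fin k → F) : Matrix (Fin k) (Fin 1) F := Matrix.of fun i _ => v i

/-- A scalar as a `1 × 1` matrix. -/
def scMat (x : F) : Matrix (Fin 1) (Fin 1) F := Matrix.of fun _ _ => x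

/-- `Y_i`: the lower-left `i×i` corner submatrix of `Y` (rows `r-i+1,…,r`, columns `1,…,i`,
1-indexed). -/
def llCorner (r : ℕ) (Y : Matrix (Fin r) (Fin r) F) (i : ℕ) (h : i ≤ r) :
    Matrix (Fin i) (Fin i) F :=
  Matrix.of fun a b =>
    Y ⟨r - i + (a : ℕ), by have := a.isLt; omega⟩ ⟨(b : ℕ), by have := b.isLt; omega⟩

/-- `Y^{(r-1)}`: the upper-right `(r-1)×(r-1)` corner submatrix of `Y` (rows `1,…,r-1`,
columns `2,…,r`, 1-indexed). -/
def urCorner (r : ℕ) (Y : Matrix (Fin r) (Fin r) F) :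
    Matrix (Fin (r - 1)) (Fin (r - 1)) F :=
  Matrix.of fun a b =>
    Y ⟨(a : ℕ), by have := a.isLt; omega⟩ ⟨(b : ℕ) + 1, by have := b.isLt; omega⟩

/-- `J₀`: the central `(2m-2)×(2m-2)` submatrix of `J'_{2m}` (rows and columns `2,…,2m-1`). -/
def J0 (m : ℕ) : Matrix (Fin (m + m - 2)) (Fin (m + m - 2)) F :=
  Matrix.of fun i j =>
    Jp F m ⟨(i : ℕ) + 1, by have := i.isLt; omega⟩ ⟨(j : ℕ) + 1, by have := j.isLt; omega⟩

/-- `diag(t₁,…,t_n, t_n⁻¹,…,t₁⁻¹)` (with `n = r + m`), realized on the index type with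
block sizes `(r, 2m, r)`. -/
def torus (r m : ℕ) (t : Fin (r + m) → Fˣ) :
    Matrix (Fin (r + (m + m) + r)) (Fin (r + (m + m) + r)) F :=
  Matrix.diagonal fun i =>
    if h : (i : ℕ) < r + m then ((t ⟨(i : ℕ), h⟩ : Fˣ) : F)
    else (((t ⟨r + (m + m) + r - 1 - (i : ℕ), by have := i.isLt; omega⟩)⁻¹ : Fˣ) : F)

/-- `Y_{i,j}`: the `(j-1)×(j-1)` submatrix of `Y` on the rows `{r-j+1,…,r} \ {r-i+1}` and the
columns `1,…,j-1` (all 1-indexed). -/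
def subDelRow (r : ℕ) (Y : Matrix (Fin r) (Fin r) F) (i j : ℕ)
    (hi : 1 ≤ i) (hij : i < j) (hj : j ≤ r) : Matrix (Fin (j - 1)) (Fin (j - 1)) F :=
  Matrix.of fun a b =>
    Y (if h : r - j + (a : ℕ) < r - i then
          (⟨r - j + (a : ℕ), by have := a.isLt; omega⟩ : Fin r)
        else (⟨r - j + (a : ℕ) + 1, by have := a.isLt; omega⟩ : Fin r))
      ⟨(b : ℕ), by have := b.isLt; omega⟩

/-- `Y'_{i,j}`: the `(r-i)×(r-i)` submatrix of `Y` on the rows `i+1,…,r` and the columns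
`{1,…,r-i+1} \ {r-j+1}` (all 1-indexed). -/
def subDelCol (r : ℕ) (Y : Matrix (Fin r) (Fin r) F) (i j : ℕ)
    (hi : 1 ≤ i) (hij : i < j) (hj : j ≤ r) : Matrix (Fin (r - i)) (Fin (r - i)) F :=
  Matrix.of fun a b =>
    Y ⟨i + (a : ℕ), by have := a.isLt; omega⟩
      (if h : (b : ℕ) < r - j then (⟨(b : ℕ), by have := b.isLt; omega⟩ : Fin r)
        else (⟨(b : ℕ) + 1, by have := b.isLt; omega⟩ : Fin r))


set_option linter.unusedSectionVars false
set_option maxHeartbeats 1000000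

section AuxBlk
/-! ### index embeddings -/

def e1 {a b c : ℕ} (k : Fin a) : Fin (a + b + c) := ⟨k.1, by omega⟩
def e2 {a b c : ℕ} (k : Fin b) : Fin (a + b + c) := ⟨a + k.1, by omega⟩
def e3 {a b c : ℕ} (k : Fin c) : Fin (a + b + c) := ⟨a + b + k.1, by omega⟩
def f1 {a b : ℕ} (k : Fin a) : Fin (a + b) := ⟨k.1, by omega⟩
def f2 {a b : ℕ} (k : Fin b) : Fin (a + b) := ⟨a + k.1, by omega⟩

@[simp] lemma e1_inj {a b c : ℕ} (k l : Fin a) : (e1 k : Fin (a+b+c)) = e1 l ↔ k = l := by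
  simp [e1, Fin.ext_iff]
@[simp] lemma e2_inj {a b c : ℕ} (k l : Fin b) : (e2 (a:=a) (c:=c) k) = e2 l ↔ k = l := by
  simp [e2, Fin.ext_iff]
@[simp] lemma e3_inj {a b c : ℕ} (k l : Fin c) : (e3 (a:=a) (b:=b) k) = e3 l ↔ k = l := by
  simp [e3, Fin.ext_iff]
@[simp] lemma e1_ne_e2 {a b c : ℕ} (k : Fin a) (l : Fin b) :
    (e1 k : Fin (a+b+c)) ≠ e2 l := by simp [e1, e2, Fin.ext_iff]; omega
@[simp] lemma e1_ne_e3 {a b c : ℕ} (k : Fin a) (l : Fin c) :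
    (e1 k : Fin (a+b+c)) ≠ e3 l := by simp [e1, e3, Fin.ext_iff]; omega
@[simp] lemma e2_ne_e3 {a b c : ℕ} (k : Fin b) (l : Fin c) :
    (e2 (a:=a) k : Fin (a+b+c)) ≠ e3 l := by simp [e2, e3, Fin.ext_iff]; omega
@[simp] lemma e2_ne_e1 {a b c : ℕ} (k : Fin b) (l : Fin a) :
    (e2 (a:=a) (c:=c) k) ≠ e1 l := by simp [e1, e2, Fin.ext_iff]; omega
@[simp] lemma e3_ne_e1 {a b c : ℕ} (k : Fin c) (l : Fin a) :
    (e3 (a:=a) (b:=b) k) ≠ e1 l := by simp [e1, e3, Fin.ext_iff]; omega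
@[simp] lemma e3_ne_e2 {a b c : ℕ} (k : Fin c) (l : Fin b) :
    (e3 (a:=a) (b:=b) k) ≠ e2 l := by simp [e2, e3, Fin.ext_iff]; omega
@[simp] lemma f1_inj {a b : ℕ} (k l : Fin a) : (f1 (b:=b) k) = f1 l ↔ k = l := by
  simp [f1, Fin.ext_iff]
@[simp] lemma f2_inj {a b : ℕ} (k l : Fin b) : (f2 (a:=a) k) = f2 l ↔ k = l := by
  simp [f2, Fin.ext_iff]
@[simp] lemma f1_ne_f2 {a b : ℕ} (k : Fin a) (l : Fin b) : (f1 k : Fin (a+b)) ≠ f2 l := by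
  simp [f1, f2, Fin.ext_iff]; omega
@[simp] lemma f2_ne_f1 {a b : ℕ} (k : Fin b) (l : Fin a) : (f2 k : Fin (a+b)) ≠ f1 l := by
  simp [f1, f2, Fin.ext_iff]; omega

variable {F}

/-! ### entry lemmas -/

section entries
variable {a b c d : ℕ}
  {A11 : Matrix (Fin a) (Fin a) F} {A12 : Matrix (Fin a) (Fin b) F} {A13 : Matrix (Fin a) (Fin c) F}
  {A21 : Matrix (Fin b) (Fin a) F} {A22 : Matrix (Fin b) (Fin b) F} {A23 : Matrix (Fin b) (Fin c) F}
  {A31 : Matrix (Fin c) (Fin a) F} {A32 : Matrix (Fin c) (Fin b) F} {A33 : Matrix (Fin c) (Fin c) F}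

@[simp] lemma blk3_e1_e1 (k l : Fin a) :
    blk3 F A11 A12 A13 A21 A22 A23 A31 A32 A33 (e1 k) (e1 l) = A11 k l := by
  simp only [blk3, e1, Matrix.of_apply]
  rw [dif_pos k.isLt, dif_pos l.isLt]

@[simp] lemma blk3_e1_e2 (k : Fin a) (l : Fin b) :
    blk3 F A11 A12 A13 A21 A22 A23 A31 A32 A33 (e1 k) (e2 l) = A12 k l := by
  simp only [blk3, e1, e2, Matrix.of_apply]
  rw [dif_pos k.isLt, dif_neg (by omega), dif_pos (by omega)]
  congr 1
  exact Fin.ext (by simp)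

@[simp] lemma blk3_e1_e3 (k : Fin a) (l : Fin c) :
    blk3 F A11 A12 A13 A21 A22 A23 A31 A32 A33 (e1 k) (e3 l) = A13 k l := by
  simp only [blk3, e1, e3, Matrix.of_apply]
  rw [dif_pos k.isLt, dif_neg (by omega), dif_neg (by omega)]
  congr 1
  exact Fin.ext (by simp)

@[simp] lemma blk3_e2_e1 (k : Fin b) (l : Fin a) :
    blk3 F A11 A12 A13 A21 A22 A23 A31 A32 A33 (e2 k) (e1 l) = A21 k l := by
  simp only [blk3, e1, e2, Matrix.of_apply]
  rw [dif_neg (by omega), dif_pos (show a + k.1 < a + b by omega), dif_pos l.isLt]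
  congr 1
  exact Fin.ext (by simp)

@[simp] lemma blk3_e2_e2 (k l : Fin b) :
    blk3 F A11 A12 A13 A21 A22 A23 A31 A32 A33 (e2 k) (e2 l) = A22 k l := by
  simp only [blk3, e2, Matrix.of_apply]
  rw [dif_neg (by omega), dif_pos (show a + k.1 < a + b by omega), dif_neg (by omega),
    dif_pos (show a + l.1 < a + b by omega)]
  congr 1 <;> exact Fin.ext (by simp)

@[simp] lemma blk3_e2_e3 (k : Fin b) (l : Fin c) :
    blk3 F A11 A12 A13 A21 A22 A23 A31 A32 A33 (e2 k) (e3 l) = A23 k l := by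
  simp only [blk3, e2, e3, Matrix.of_apply]
  rw [dif_neg (by omega), dif_pos (show a + k.1 < a + b by omega), dif_neg (by omega),
    dif_neg (by omega)]
  congr 1 <;> exact Fin.ext (by simp)

@[simp] lemma blk3_e3_e1 (k : Fin c) (l : Fin a) :
    blk3 F A11 A12 A13 A21 A22 A23 A31 A32 A33 (e3 k) (e1 l) = A31 k l := by
  simp only [blk3, e1, e3, Matrix.of_apply]
  rw [dif_neg (by omega), dif_neg (by omega), dif_pos l.isLt]
  congr 1
  exact Fin.ext (by simp)

@[simp] lemma blk3_e3_e2 (k : Fin c) (l : Fin b) :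
    blk3 F A11 A12 A13 A21 A22 A23 A31 A32 A33 (e3 k) (e2 l) = A32 k l := by
  simp only [blk3, e2, e3, Matrix.of_apply]
  rw [dif_neg (by omega), dif_neg (by omega), dif_neg (by omega),
    dif_pos (show a + l.1 < a + b by omega)]
  congr 1 <;> exact Fin.ext (by simp)

@[simp] lemma blk3_e3_e3 (k l : Fin c) :
    blk3 F A11 A12 A13 A21 A22 A23 A31 A32 A33 (e3 k) (e3 l) = A33 k l := by
  simp only [blk3, e3, Matrix.of_apply]
  rw [dif_neg (by omega), dif_neg (by omega), dif_neg (by omega), dif_neg (by omega)]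
  congr 1 <;> exact Fin.ext (by simp)

variable {B11 : Matrix (Fin a) (Fin c) F} {B12 : Matrix (Fin a) (Fin d) F}
  {B21 : Matrix (Fin b) (Fin c) F} {B22 : Matrix (Fin b) (Fin d) F}

@[simp] lemma blk2_f1_f1 (k : Fin a) (l : Fin c) :
    blk2 F B11 B12 B21 B22 (f1 k) (f1 l) = B11 k l := by
  simp only [blk2, f1, Matrix.of_apply]
  rw [dif_pos k.isLt, dif_pos l.isLt]

@[simp] lemma blk2_f1_f2 (k : Fin a) (l : Fin d) :
    blk2 F B11 B12 B21 B22 (f1 k) (f2 l) = B12 k l := by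
  simp only [blk2, f1, f2, Matrix.of_apply]
  rw [dif_pos k.isLt, dif_neg (by omega)]
  congr 1
  exact Fin.ext (by simp)

@[simp] lemma blk2_f2_f1 (k : Fin b) (l : Fin c) :
    blk2 F B11 B12 B21 B22 (f2 k) (f1 l) = B21 k l := by
  simp only [blk2, f1, f2, Matrix.of_apply]
  rw [dif_neg (by omega), dif_pos l.isLt]
  congr 1
  exact Fin.ext (by simp)

@[simp] lemma blk2_f2_f2 (k : Fin b) (l : Fin d) :
    blk2 F B11 B12 B21 B22 (f2 k) (f2 l) = B22 k l := by
  simp only [blk2, f2, Matrix.of_apply]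
  rw [dif_neg (by omega), dif_neg (by omega)]
  congr 1 <;> exact Fin.ext (by simp)

end entries

/-! ### sums and extensionality -/

lemma sum3 {M : Type*} [AddCommMonoid M] {a b c : ℕ} (f : Fin (a + b + c) → M) :
    ∑ k, f k = (∑ k : Fin a, f (e1 k)) + (∑ k : Fin b, f (e2 k)) + (∑ k : Fin c, f (e3 k)) := by
  rw [Fin.sum_univ_add (f := f), Fin.sum_univ_add (f := fun i : Fin (a+b) => f (Fin.castAdd c i))]
  rfl

lemma sum2 {M : Type*} [AddCommMonoid M] {a b : ℕ} (f : Fin (a + b) → M) :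
    ∑ k, f k = (∑ k : Fin a, f (f1 k)) + (∑ k : Fin b, f (f2 k)) := by
  rw [Fin.sum_univ_add (f := f)]
  rfl

lemma ext3 {a b c : ℕ} {M N : Matrix (Fin (a+b+c)) (Fin (a+b+c)) F}
    (h : ∀ i j, (M i j = N i j)) : M = N := Matrix.ext h

lemma index_cases3 {a b c : ℕ} (i : Fin (a + b + c)) :
    (∃ k : Fin a, i = e1 k) ∨ (∃ k : Fin b, i = e2 k) ∨ (∃ k : Fin c, i = e3 k) := by
  by_cases h1 : (i : ℕ) < a
  · exact Or.inl ⟨⟨i.1, h1⟩, Fin.ext rfl⟩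
  · by_cases h2 : (i : ℕ) < a + b
    · exact Or.inr (Or.inl ⟨⟨i.1 - a, by omega⟩, Fin.ext (by simp [e2]; omega)⟩)
    · exact Or.inr (Or.inr ⟨⟨i.1 - (a+b), by have := i.isLt; omega⟩,
        Fin.ext (by simp [e3]; omega)⟩)

lemma index_cases2 {a b : ℕ} (i : Fin (a + b)) :
    (∃ k : Fin a, i = f1 k) ∨ (∃ k : Fin b, i = f2 k) := by
  by_cases h1 : (i : ℕ) < a
  · exact Or.inl ⟨⟨i.1, h1⟩, Fin.ext rfl⟩
  · exact Or.inr ⟨⟨i.1 - a, by have := i.isLt; omega⟩, Fin.ext (by simp [f2]; omega)⟩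

lemma blk3_ext {a b c : ℕ} {M N : Matrix (Fin (a+b+c)) (Fin (a+b+c)) F}
    (h11 : ∀ k l, M (e1 k) (e1 l) = N (e1 k) (e1 l))
    (h12 : ∀ k l, M (e1 k) (e2 l) = N (e1 k) (e2 l))
    (h13 : ∀ k l, M (e1 k) (e3 l) = N (e1 k) (e3 l))
    (h21 : ∀ k l, M (e2 k) (e1 l) = N (e2 k) (e1 l))
    (h22 : ∀ k l, M (e2 k) (e2 l) = N (e2 k) (e2 l))
    (h23 : ∀ k l, M (e2 k) (e3 l) = N (e2 k) (e3 l))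
    (h31 : ∀ k l, M (e3 k) (e1 l) = N (e3 k) (e1 l))
    (h32 : ∀ k l, M (e3 k) (e2 l) = N (e3 k) (e2 l))
    (h33 : ∀ k l, M (e3 k) (e3 l) = N (e3 k) (e3 l)) : M = N := by
  ext i j
  rcases index_cases3 i with ⟨k, rfl⟩ | ⟨k, rfl⟩ | ⟨k, rfl⟩ <;>
    rcases index_cases3 j with ⟨l, rfl⟩ | ⟨l, rfl⟩ | ⟨l, rfl⟩ <;>
    solve_by_elim

lemma blk2_ext {a b c d : ℕ} {M N : Matrix (Fin (a+b)) (Fin (c+d)) F}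
    (h11 : ∀ k l, M (f1 k) (f1 l) = N (f1 k) (f1 l))
    (h12 : ∀ k l, M (f1 k) (f2 l) = N (f1 k) (f2 l))
    (h21 : ∀ k l, M (f2 k) (f1 l) = N (f2 k) (f1 l))
    (h22 : ∀ k l, M (f2 k) (f2 l) = N (f2 k) (f2 l)) : M = N := by
  ext i j
  rcases index_cases2 i with ⟨k, rfl⟩ | ⟨k, rfl⟩ <;>
    rcases index_cases2 j with ⟨l, rfl⟩ | ⟨l, rfl⟩ <;> solve_by_elim

/-! ### algebra -/

lemma blk3_mul {a b c : ℕ}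
    (A11 : Matrix (Fin a) (Fin a) F) (A12 : Matrix (Fin a) (Fin b) F) (A13 : Matrix (Fin a) (Fin c) F)
    (A21 : Matrix (Fin b) (Fin a) F) (A22 : Matrix (Fin b) (Fin b) F) (A23 : Matrix (Fin b) (Fin c) F)
    (A31 : Matrix (Fin c) (Fin a) F) (A32 : Matrix (Fin c) (Fin b) F) (A33 : Matrix (Fin c) (Fin c) F)
    (B11 : Matrix (Fin a) (Fin a) F) (B12 : Matrix (Fin a) (Fin b) F) (B13 : Matrix (Fin a) (Fin c) F)
    (B21 : Matrix (Fin b) (Fin a) F) (B22 : Matrix (Fin b) (Fin b) F) (B23 : Matrix (Fin b) (Fin c) F)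
    (B31 : Matrix (Fin c) (Fin a) F) (B32 : Matrix (Fin c) (Fin b) F) (B33 : Matrix (Fin c) (Fin c) F) :
    blk3 F A11 A12 A13 A21 A22 A23 A31 A32 A33 * blk3 F B11 B12 B13 B21 B22 B23 B31 B32 B33 =
    blk3 F (A11*B11+A12*B21+A13*B31) (A11*B12+A12*B22+A13*B32) (A11*B13+A12*B23+A13*B33)
           (A21*B11+A22*B21+A23*B31) (A21*B12+A22*B22+A23*B32) (A21*B13+A22*B23+A23*B33)
           (A31*B11+A32*B21+A33*B31) (A31*B12+A32*B22+A33*B32) (A31*B13+A32*B23+A33*B33) := by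
  apply blk3_ext <;> intro k l <;>
    simp [Matrix.mul_apply, sum3, Matrix.add_apply]

lemma blk2_mul {a b : ℕ}
    (A11 : Matrix (Fin a) (Fin a) F) (A12 : Matrix (Fin a) (Fin b) F)
    (A21 : Matrix (Fin b) (Fin a) F) (A22 : Matrix (Fin b) (Fin b) F)
    (B11 : Matrix (Fin a) (Fin a) F) (B12 : Matrix (Fin a) (Fin b) F)
    (B21 : Matrix (Fin b) (Fin a) F) (B22 : Matrix (Fin b) (Fin b) F) :
    blk2 F A11 A12 A21 A22 * blk2 F B11 B12 B21 B22 =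
    blk2 F (A11*B11+A12*B21) (A11*B12+A12*B22) (A21*B11+A22*B21) (A21*B12+A22*B22) := by
  apply blk2_ext <;> intro k l <;>
    simp [Matrix.mul_apply, sum2, Matrix.add_apply]

lemma blk3_one {a b c : ℕ} :
    (1 : Matrix (Fin (a+b+c)) (Fin (a+b+c)) F) = blk3 F 1 0 0 0 1 0 0 0 1 := by
  apply blk3_ext <;> intro k l <;> simp [Matrix.one_apply]

lemma blk2_one {a b : ℕ} :
    (1 : Matrix (Fin (a+b)) (Fin (a+b)) F) = blk2 F 1 0 0 1 := by
  apply blk2_ext <;> intro k l <;> simp [Matrix.one_apply]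

lemma blk2_neg {a b c d : ℕ} (A : Matrix (Fin a) (Fin c) F) (B : Matrix (Fin a) (Fin d) F)
    (C : Matrix (Fin b) (Fin c) F) (D : Matrix (Fin b) (Fin d) F) :
    -blk2 F A B C D = blk2 F (-A) (-B) (-C) (-D) := by
  apply blk2_ext <;> intro k l <;> simp

lemma blk3_congr {a b c : ℕ}
    {A11 B11 : Matrix (Fin a) (Fin a) F} {A12 B12 : Matrix (Fin a) (Fin b) F}
    {A13 B13 : Matrix (Fin a) (Fin c) F}
    {A21 B21 : Matrix (Fin b) (Fin a) F} {A22 B22 : Matrix (Fin b) (Fin b) F}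
    {A23 B23 : Matrix (Fin b) (Fin c) F}
    {A31 B31 : Matrix (Fin c) (Fin a) F} {A32 B32 : Matrix (Fin c) (Fin b) F}
    {A33 B33 : Matrix (Fin c) (Fin c) F}
    (h11 : A11 = B11) (h12 : A12 = B12) (h13 : A13 = B13)
    (h21 : A21 = B21) (h22 : A22 = B22) (h23 : A23 = B23)
    (h31 : A31 = B31) (h32 : A32 = B32) (h33 : A33 = B33) :
    blk3 F A11 A12 A13 A21 A22 A23 A31 A32 A33 = blk3 F B11 B12 B13 B21 B22 B23 B31 B32 B33 := by
  rw [h11, h12, h13, h21, h22, h23, h31, h32, h33]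

end AuxBlk

lemma neg_one_pow_sq (k : ℕ) : ((-1 : F) ^ k) * ((-1 : F) ^ k) = 1 := by
  rw [← pow_add]
  exact Even.neg_one_pow ⟨k, rfl⟩

lemma Jmat_mul_Jmat (k : ℕ) (hk : 1 ≤ k) :
    Jmat F k * Jmat F k = ((-1 : F) ^ (k - 1)) • (1 : Matrix (Fin k) (Fin k) F) := by
  ext i j
  rw [Matrix.mul_apply]
  rw [Finset.sum_eq_single (⟨k - 1 - (i : ℕ), by omega⟩ : Fin k)]
  · simp only [Jmat, Matrix.of_apply, Matrix.smul_apply, Matrix.one_apply, smul_eq_mul,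
      Fin.val_mk]
    by_cases hij : i = j
    · subst hij
      rw [if_pos (show (i : ℕ) + (k - 1 - (i : ℕ)) = k - 1 by omega),
        if_pos (show (k - 1 - (i : ℕ)) + (i : ℕ) = k - 1 by omega), if_pos rfl, mul_one,
        ← pow_add]
      congr 1
      omega
    · have hij' : (i : ℕ) ≠ (j : ℕ) := fun h => hij (Fin.ext h)
      rw [if_neg (show ¬((k - 1 - (i : ℕ)) + (j : ℕ) = k - 1) by omega), if_neg hij]
      simp
  · intro l _ hl
    simp only [Jmat, Matrix.of_apply]
    have : ¬((i : ℕ) + (l : ℕ) = k - 1) := by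
      intro h
      exact hl (Fin.ext (by simp only [Fin.val_mk]; omega))
    rw [if_neg this, zero_mul]
  · simp

lemma Jmat_transpose (k : ℕ) (hk : 1 ≤ k) :
    (Jmat F k)ᵀ = ((-1 : F) ^ (k - 1)) • Jmat F k := by
  ext i j
  simp only [Matrix.transpose_apply, Jmat, Matrix.of_apply, Matrix.smul_apply, smul_eq_mul]
  by_cases h : (i : ℕ) + (j : ℕ) = k - 1
  · rw [if_pos (by omega), if_pos h]
    have h2 : (k - 1) + (i : ℕ) = (j : ℕ) + 2 * (i : ℕ) := by omega
    calc ((-1 : F) ^ (j : ℕ)) = (-1) ^ ((j : ℕ) + 2 * (i : ℕ)) := by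
          rw [pow_add, pow_mul]; simp
      _ = (-1) ^ ((k - 1) + (i : ℕ)) := by rw [h2]
      _ = (-1) ^ (k - 1) * (-1) ^ (i : ℕ) := by rw [pow_add]
  · rw [if_neg (by omega), if_neg h, mul_zero]

lemma Jmat_mul_self_eq_one (k : ℕ) (hk : 1 ≤ k) :
    Jmat F k * (((-1 : F) ^ (k - 1)) • Jmat F k) = 1 := by
  rw [mul_smul_comm, Jmat_mul_Jmat F k hk, smul_smul, neg_one_pow_sq, one_smul]

lemma Jmat_isUnit (k : ℕ) (hk : 1 ≤ k) : IsUnit (Jmat F k) :=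
  ⟨⟨Jmat F k, ((-1 : F) ^ (k - 1)) • Jmat F k, Jmat_mul_self_eq_one F k hk,
    by rw [smul_mul_assoc, Jmat_mul_Jmat F k hk, smul_smul, neg_one_pow_sq, one_smul]⟩, rfl⟩

lemma Jmat_inv (k : ℕ) (hk : 1 ≤ k) :
    (Jmat F k)⁻¹ = ((-1 : F) ^ (k - 1)) • Jmat F k :=
  Matrix.inv_eq_right_inv (Jmat_mul_self_eq_one F k hk)

lemma Jmat_mul_inv (k : ℕ) (hk : 1 ≤ k) : Jmat F k * (Jmat F k)⁻¹ = 1 := by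
  rw [Jmat_inv F k hk]; exact Jmat_mul_self_eq_one F k hk

lemma Jmat_inv_mul (k : ℕ) (hk : 1 ≤ k) : (Jmat F k)⁻¹ * Jmat F k = 1 := by
  rw [Jmat_inv F k hk, smul_mul_assoc, Jmat_mul_Jmat F k hk, smul_smul, neg_one_pow_sq, one_smul]

lemma Jmat_mul_transpose (k : ℕ) (hk : 1 ≤ k) : Jmat F k * (Jmat F k)ᵀ = 1 := by
  rw [Jmat_transpose F k hk]; exact Jmat_mul_self_eq_one F k hk

lemma Jmat_transpose_mul (k : ℕ) (hk : 1 ≤ k) : (Jmat F k)ᵀ * Jmat F k = 1 := by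
  rw [Jmat_transpose F k hk, smul_mul_assoc, Jmat_mul_Jmat F k hk, smul_smul, neg_one_pow_sq,
    one_smul]

lemma blk2_congr {a b c d : ℕ}
    {A11 B11 : Matrix (Fin a) (Fin c) F} {A12 B12 : Matrix (Fin a) (Fin d) F}
    {A21 B21 : Matrix (Fin b) (Fin c) F} {A22 B22 : Matrix (Fin b) (Fin d) F}
    (h11 : A11 = B11) (h12 : A12 = B12) (h21 : A21 = B21) (h22 : A22 = B22) :
    blk2 F A11 A12 A21 A22 = blk2 F B11 B12 B21 B22 := by
  rw [h11, h12, h21, h22]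

lemma Jp_mul_Jp (k : ℕ) (hk : 1 ≤ k) : Jp F k * Jp F k = -1 := by
  rw [Jp, blk2_mul]
  rw [show (1 : Matrix (Fin (k+k)) (Fin (k+k)) F) = blk2 F 1 0 0 1 from blk2_one, blk2_neg]
  apply blk2_congr <;> simp [mul_neg, Jmat_mul_transpose F k hk, Jmat_transpose_mul F k hk]


lemma Jp_inv (k : ℕ) (hk : 1 ≤ k) : (Jp F k)⁻¹ = -Jp F k :=
  Matrix.inv_eq_right_inv (by rw [mul_neg, Jp_mul_Jp F k hk, neg_neg])

lemma Jp_isUnit (k : ℕ) (hk : 1 ≤ k) : IsUnit (Jp F k) :=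
  ⟨⟨Jp F k, -Jp F k, by rw [mul_neg, Jp_mul_Jp F k hk, neg_neg],
    by rw [neg_mul, Jp_mul_Jp F k hk, neg_neg]⟩, rfl⟩

section theta
variable {r : ℕ} (hr : 1 ≤ r)
include hr

lemma theta_isUnit {u : Matrix (Fin r) (Fin r) F} (hu : IsUnit u) :
    IsUnit (theta F r u) := by
  have h1 := Jmat_isUnit F r hr
  have h2 : IsUnit ((u⁻¹)ᵀ) := by
    rw [Matrix.isUnit_iff_isUnit_det, Matrix.det_transpose]
    exact (Matrix.isUnit_iff_isUnit_det _).mp ((Matrix.isUnit_nonsing_inv_iff).mpr hu)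
  exact (h1.mul h2).mul ((Matrix.isUnit_nonsing_inv_iff).mpr h1)

lemma theta_mul (A B : Matrix (Fin r) (Fin r) F) :
    theta F r (A * B) = theta F r A * theta F r B := by
  unfold theta
  rw [Matrix.mul_inv_rev, Matrix.transpose_mul]
  simp only [Matrix.mul_assoc]
  rw [show (Jmat F r)⁻¹ * (Jmat F r * ((B⁻¹)ᵀ * (Jmat F r)⁻¹)) = (B⁻¹)ᵀ * (Jmat F r)⁻¹ by
    rw [← Matrix.mul_assoc, Jmat_inv_mul F r hr, Matrix.one_mul]]

lemma theta_one : theta F r (1 : Matrix (Fin r) (Fin r) F) = 1 := by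
  unfold theta
  rw [inv_one, Matrix.transpose_one, Matrix.mul_one, Jmat_mul_inv F r hr]

lemma theta_inv_eq {u : Matrix (Fin r) (Fin r) F} (hu : IsUnit u) :
    (theta F r u)⁻¹ = Jmat F r * uᵀ * (Jmat F r)⁻¹ := by
  apply Matrix.inv_eq_right_inv
  unfold theta
  simp only [Matrix.mul_assoc]
  rw [show (Jmat F r)⁻¹ * (Jmat F r * (uᵀ * (Jmat F r)⁻¹)) = uᵀ * (Jmat F r)⁻¹ by
    rw [← Matrix.mul_assoc, Jmat_inv_mul F r hr, Matrix.one_mul]]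
  rw [← Matrix.mul_assoc ((u⁻¹)ᵀ), ← Matrix.transpose_mul,
    Matrix.mul_nonsing_inv _ ((Matrix.isUnit_iff_isUnit_det _).mp hu), Matrix.transpose_one,
    Matrix.one_mul, Jmat_mul_inv F r hr]

lemma theta_inv_transpose {u : Matrix (Fin r) (Fin r) F} (hu : IsUnit u) :
    ((theta F r u)⁻¹)ᵀ = (Jmat F r)⁻¹ * u * Jmat F r := by
  rw [theta_inv_eq F hr hu]
  rw [Matrix.transpose_mul, Matrix.transpose_mul, Matrix.transpose_transpose]
  rw [Matrix.transpose_nonsing_inv, Jmat_transpose F r hr]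
  have hsj : (((-1 : F) ^ (r - 1)) • Jmat F r)⁻¹ = Jmat F r :=
    Matrix.inv_eq_right_inv
      (by rw [smul_mul_assoc, Jmat_mul_Jmat F r hr, smul_smul, neg_one_pow_sq, one_smul])
  rw [hsj, Jmat_inv F r hr]
  simp only [smul_mul_assoc, mul_smul_comm, Matrix.mul_assoc]

lemma JJ {k : ℕ} (W : Matrix (Fin r) (Fin k) F) :
    Jmat F r * (Jmat F r * W) = ((-1 : F) ^ (r - 1)) • W := by
  rw [← Matrix.mul_assoc, Jmat_mul_Jmat F r hr, Matrix.smul_mul, Matrix.one_mul]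

lemma key1 {u1 : Matrix (Fin r) (Fin r) F} (hu1 : IsUnit u1) {k : ℕ}
    (Z : Matrix (Fin r) (Fin k) F) :
    ((theta F r u1)⁻¹)ᵀ * (Jmat F r * (u1⁻¹ * Z)) = Jmat F r * Z := by
  rw [theta_inv_transpose F hr hu1, Jmat_inv F r hr]
  simp only [Matrix.smul_mul, Matrix.mul_assoc]
  rw [JJ F hr, Matrix.mul_smul, Matrix.mul_smul, smul_smul, neg_one_pow_sq, one_smul,
    Matrix.mul_nonsing_inv_cancel_left _ _ ((Matrix.isUnit_iff_isUnit_det _).mp hu1)]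

lemma key2 {u1 : Matrix (Fin r) (Fin r) F} (hu1 : IsUnit u1) :
    ((theta F r u1)⁻¹)ᵀ * (Jmat F r)⁻¹ = (Jmat F r)⁻¹ * u1 := by
  rw [theta_inv_transpose F hr hu1]
  simp only [Matrix.mul_assoc]
  rw [Matrix.mul_nonsing_inv _ ((Matrix.isUnit_iff_isUnit_det _).mp (Jmat_isUnit F r hr)),
    Matrix.mul_one]

end theta

section main
variable {r m : ℕ} (hr : 1 ≤ r) (hm : 1 ≤ m)

lemma sp_key (hm : 1 ≤ m) {u2 : Matrix (Fin (m + m)) (Fin (m + m)) F} (hu2 : IsUnit u2)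
    (h : u2ᵀ * Jp F m * u2 = Jp F m) : Jp F m * u2ᵀ = u2⁻¹ * Jp F m := by
  have hu2d := (Matrix.isUnit_iff_isUnit_det _).mp hu2
  have h1 : u2ᵀ * Jp F m = Jp F m * u2⁻¹ := by
    calc u2ᵀ * Jp F m = u2ᵀ * Jp F m * u2 * u2⁻¹ := by
          rw [Matrix.mul_nonsing_inv_cancel_right _ _ hu2d]
      _ = Jp F m * u2⁻¹ := by rw [h]
  have h2 : Jp F m * (u2ᵀ * Jp F m) = -u2⁻¹ := by
    rw [h1, ← Matrix.mul_assoc, Jp_mul_Jp F m hm, neg_mul, Matrix.one_mul]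
  calc Jp F m * u2ᵀ = Jp F m * u2ᵀ * (Jp F m * -Jp F m) := by
        rw [mul_neg, Jp_mul_Jp F m hm, neg_neg, Matrix.mul_one]
    _ = Jp F m * (u2ᵀ * Jp F m) * -Jp F m := by simp only [Matrix.mul_assoc]
    _ = -u2⁻¹ * -Jp F m := by rw [h2]
    _ = u2⁻¹ * Jp F m := by rw [neg_mul_neg]

variable {X : Matrix (Fin r) (Fin (m + m)) F} {Y : Matrix (Fin r) (Fin r) F}
  {u1 : Matrix (Fin r) (Fin r) F} {u2 : Matrix (Fin (m + m)) (Fin (m + m)) F}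

include hr

lemma Yp_inv (hY : IsUnit Y) (hu1 : IsUnit u1) (t : Fˣ) :
    (((t : F) ^ 2) • (u1⁻¹ * Y * theta F r u1))⁻¹ =
      (((t : F) ^ 2)⁻¹) • ((theta F r u1)⁻¹ * (Y⁻¹ * u1)) := by
  have hu1d := (Matrix.isUnit_iff_isUnit_det _).mp hu1
  have hYd := (Matrix.isUnit_iff_isUnit_det _).mp hY
  have hThd := (Matrix.isUnit_iff_isUnit_det _).mp (theta_isUnit F hr hu1)
  apply Matrix.inv_eq_right_inv
  rw [Matrix.smul_mul, Matrix.mul_smul, smul_smul,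
    mul_inv_cancel₀ (pow_ne_zero 2 t.ne_zero), one_smul]
  simp only [Matrix.mul_assoc]
  rw [Matrix.mul_nonsing_inv_cancel_left _ _ hThd,
    Matrix.mul_nonsing_inv_cancel_left _ _ hYd, Matrix.nonsing_inv_mul _ hu1d]

lemma theta_block (hY : IsUnit Y) (hu1 : IsUnit u1) (t : Fˣ) :
    theta F r (((t : F) ^ 2) • (u1⁻¹ * Y * theta F r u1)) =
      (((t : F) ^ 2)⁻¹) • ((theta F r u1)⁻¹ * (theta F r Y * u1)) := by
  rw [show theta F r (((t : F) ^ 2) • (u1⁻¹ * Y * theta F r u1)) =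
    Jmat F r * ((((t : F) ^ 2) • (u1⁻¹ * Y * theta F r u1))⁻¹)ᵀ * (Jmat F r)⁻¹ from rfl]
  rw [Yp_inv F hr hY hu1 t, Matrix.transpose_smul, Matrix.transpose_mul, Matrix.transpose_mul,
    Matrix.mul_smul, Matrix.smul_mul]
  congr 1
  simp only [Matrix.mul_assoc]
  rw [key2 F hr hu1]
  rw [theta_inv_eq F hr hu1]
  rw [show theta F r Y = Jmat F r * (Y⁻¹)ᵀ * (Jmat F r)⁻¹ from rfl]
  simp only [Matrix.mul_assoc]
  rw [Matrix.nonsing_inv_mul_cancel_left _ _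
    ((Matrix.isUnit_iff_isUnit_det _).mp (Jmat_isUnit F r hr))]

lemma Smat_equiv (hm : 1 ≤ m) (hY : IsUnit Y) (hu1 : IsUnit u1) (hu2 : IsUnit u2)
    (hsp : u2ᵀ * Jp F m * u2 = Jp F m) (t : Fˣ) :
    Smat F r m ((t : F) • (u1⁻¹ * X * u2)) (((t : F) ^ 2) • (u1⁻¹ * Y * theta F r u1)) =
      u2⁻¹ * Smat F r m X Y * u2 := by
  have hu1d := (Matrix.isUnit_iff_isUnit_det _).mp hu1
  have hu2d := (Matrix.isUnit_iff_isUnit_det _).mp hu2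
  unfold Smat
  rw [Matrix.mul_sub, Matrix.sub_mul, Matrix.mul_one, Matrix.nonsing_inv_mul _ hu2d]
  congr 1
  rw [Yp_inv F hr hY hu1 t]
  rw [Matrix.transpose_smul, Matrix.transpose_smul, Matrix.transpose_mul, Matrix.transpose_mul,
    Matrix.transpose_mul, Matrix.transpose_mul]
  simp only [Matrix.mul_smul, Matrix.smul_mul, smul_smul]
  rw [show (t : F) * (((t : F) ^ 2)⁻¹ * (t : F)) = 1 by field_simp]
  rw [one_smul]
  simp only [Matrix.mul_assoc]
  rw [show (u1⁻¹)ᵀ * (u1ᵀ * ((Y⁻¹)ᵀ * (((theta F r u1)⁻¹)ᵀ * (Jmat F r * (u1⁻¹ * (X * u2)))))) =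
      (u1⁻¹)ᵀ * u1ᵀ * ((Y⁻¹)ᵀ * (((theta F r u1)⁻¹)ᵀ * (Jmat F r * (u1⁻¹ * (X * u2))))) from
    (Matrix.mul_assoc _ _ _).symm]
  rw [← Matrix.transpose_mul, Matrix.mul_nonsing_inv _ hu1d, Matrix.transpose_one,
    Matrix.one_mul]
  rw [key1 F hr hu1 (X * u2)]
  rw [← Matrix.mul_assoc (Jp F m) u2ᵀ, sp_key F hm hu2 hsp]
  simp only [Matrix.mul_assoc]

end main


/-- Twisted equivariance of the Bruhat image, where
`Θ(g) = ẇ_0⁻¹ g ẇ_0`. -/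
theorem twisted_equivariance (r m : ℕ) (hr : 1 ≤ r) (hm : 1 ≤ m)
    (X : Matrix (Fin r) (Fin (m + m)) F) (Y : Matrix (Fin r) (Fin r) F)
    (hY : IsUnit Y) (hS : IsUnit (Smat F r m X Y))
    (u1 : Matrix (Fin r) (Fin r) F) (hu1 : IsUnit u1)
    (u2 : Matrix (Fin (m + m)) (Fin (m + m)) F) (hu2 : u2 ∈ Sp F m) (t : Fˣ) :
    Smat F r m ((t : F) • (u1⁻¹ * X * u2)) (((t : F) ^ 2) • (u1⁻¹ * Y * theta F r u1)) =
      u2⁻¹ * Smat F r m X Y * u2 ∧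
    IsUnit (Smat F r m ((t : F) • (u1⁻¹ * X * u2))
      (((t : F) ^ 2) • (u1⁻¹ * Y * theta F r u1))) ∧
    (w0 F r m)⁻¹ * (coroot F r m t * (levi F r m u1 u2)⁻¹) * w0 F r m *
        mMat F r m X Y * (levi F r m u1 u2 * (coroot F r m t)⁻¹) =
      mMat F r m ((t : F) • (u1⁻¹ * X * u2)) (((t : F) ^ 2) • (u1⁻¹ * Y * theta F r u1)) := by
  obtain ⟨hu2u, hsp⟩ := hu2
  have hu1d := (Matrix.isUnit_iff_isUnit_det _).mp hu1
  have hu2d := (Matrix.isUnit_iff_isUnit_det _).mp hu2u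
  have hYd := (Matrix.isUnit_iff_isUnit_det _).mp hY
  have hTh := theta_isUnit F hr hu1
  have hThd := (Matrix.isUnit_iff_isUnit_det _).mp hTh
  have part1 := Smat_equiv F hr hm hY hu1 hu2u hsp t (X := X)
  refine ⟨part1, ?_, ?_⟩
  · rw [part1]
    exact ((Matrix.isUnit_nonsing_inv_iff.mpr hu2u).mul hS).mul hu2u
  have hts : (t : F) * ((t⁻¹ : Fˣ) : F) = 1 := by
    rw [← Units.val_mul, mul_inv_cancel, Units.val_one]
  have hst : ((t⁻¹ : Fˣ) : F) * (t : F) = 1 := by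
    rw [← Units.val_mul, inv_mul_cancel, Units.val_one]
  have hEE : ((-1 : F) ^ r) * ((-1 : F) ^ r) = 1 := neg_one_pow_sq F r
  have hw0inv : (w0 F r m)⁻¹ =
      blk3 F 0 0 ((-1 : F) ^ r • (1 : Matrix (Fin r) (Fin r) F)) 0 1 0 1 0 0 := by
    apply Matrix.inv_eq_right_inv
    rw [w0, blk3_mul, blk3_one]
    apply blk3_congr <;>
      simp [Matrix.smul_mul, Matrix.mul_smul, smul_smul, hEE]
  have hLinv : (levi F r m u1 u2)⁻¹ = blk3 F u1⁻¹ 0 0 0 u2⁻¹ 0 0 0 (theta F r u1)⁻¹ := by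
    apply Matrix.inv_eq_right_inv
    rw [levi, blk3_mul, blk3_one]
    apply blk3_congr <;>
      simp [Matrix.mul_nonsing_inv _ hu1d, Matrix.mul_nonsing_inv _ hu2d,
        Matrix.mul_nonsing_inv _ hThd]
  have hCinv : (coroot F r m t)⁻¹ =
      blk3 F (((t⁻¹ : Fˣ) : F) • (1 : Matrix (Fin r) (Fin r) F)) 0 0 0 1 0 0 0
        ((t : F) • (1 : Matrix (Fin r) (Fin r) F)) := by
    apply Matrix.inv_eq_right_inv
    rw [coroot, blk3_mul, blk3_one]
    apply blk3_congr <;>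
      simp [Matrix.smul_mul, Matrix.mul_smul, smul_smul, hts, hst]
  rw [hw0inv, hLinv, hCinv]
  simp only [w0, coroot, levi, mMat]
  rw [blk3_mul, blk3_mul, blk3_mul, blk3_mul, blk3_mul, blk3_mul]
  apply blk3_congr
  case h12 => simp
  case h13 => simp
  case h21 => simp
  case h23 => simp
  case h31 => simp
  case h32 => simp
  case h11 =>
    simp only [Matrix.smul_mul, Matrix.mul_smul, smul_smul, Matrix.mul_zero, Matrix.zero_mul,
      Matrix.mul_one, Matrix.one_mul, add_zero, zero_add, smul_zero]
    rw [theta_block F hr hY hu1 t, ← Matrix.mul_assoc]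
    congr 1
    rw [Units.val_inv_eq_inv_val]
    rw [show ((t : F))⁻¹ * ((-1 : F) ^ r * (((t : F))⁻¹ * (-1 : F) ^ r)) =
        (((-1 : F) ^ r) * ((-1 : F) ^ r)) * (((t : F))⁻¹ * ((t : F))⁻¹) from by ring,
      hEE, one_mul, ← mul_inv, ← sq]
  case h22 =>
    simp only [Matrix.smul_mul, Matrix.mul_smul, smul_smul, Matrix.mul_zero, Matrix.zero_mul,
      Matrix.mul_one, Matrix.one_mul, add_zero, zero_add, smul_zero]
    rw [part1, Matrix.mul_inv_rev, Matrix.mul_inv_rev,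
      Matrix.nonsing_inv_nonsing_inv _ hu2d, ← Matrix.mul_assoc]
  case h33 =>
    simp only [Matrix.smul_mul, Matrix.mul_smul, smul_smul, Matrix.mul_zero, Matrix.zero_mul,
      Matrix.mul_one, Matrix.one_mul, add_zero, zero_add, smul_zero]
    rw [← sq]

end RS
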